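/- arXiv:2009.10583 — 2 statements merged into one kernel-verified Lean document; each statement's English description precedes it below -/
import Mathlib

section
/- Let N₀, N₁ ∈ ℝ^n be nonzero constant vectors and f₀, f₁ : ℝ^n → ℝ smooth scalar functions, and consider x' = N₀f₀(x) + εN₁f₁(x). Suppose S₀ = {f₀ = 0} is a smooth normally hyperbolic critical manifold with embedding φ₀ and projection P₀(ξ) onto the tangent space of S₀ along span N₀. If there exists ξ with P₀(ξ)N₁f₁(φ₀(ξ)) = 0 but N₁f₁(φ₀(ξ)) ≠ 0, then N₁ ∈ span N₀, and consequently the reduced slow vector field r₁ vanishes identically on the chart. Hence either the zero set S₁ of r₁ consists entirely of equilibria of the full system, or r₁ ≡ 0. -/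
open Matrix

/-- Proposition 4.1: consider `x' = N₀ f₀(x) + ε N₁ f₁(x)` with constant nonzero
vectors `N₀, N₁ ∈ ℝ^n` and scalar `f₀, f₁`, a smooth embedding `φ₀` of the
normally hyperbolic critical manifold `S₀ = {f₀ = 0}`, and projections `P₀(ξ)`
onto the tangent space of `S₀` along `span N₀` (so `ker P₀(ξ) = span N₀` for
every `ξ`). If at some chart point `ξ` the projected slow vector field
vanishes, `P₀(ξ)(f₁(φ₀(ξ)) • N₁) = 0`, while `f₁(φ₀(ξ)) • N₁ ≠ 0`, then
`N₁ ∈ span N₀` and the reduced slow vector field vanishes identically on the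
chart, i.e. `P₀(ξ)(f₁(φ₀(ξ)) • N₁) = 0` for all `ξ`. Hence either the zero set
`S₁` of `r₁` consists entirely of equilibria of the full system, or `r₁ ≡ 0`. -/
theorem stmt17 (n k : ℕ)
    (N₀ N₁ : Fin n → ℝ) (hN₀ : N₀ ≠ 0) (hN₁ : N₁ ≠ 0)
    (f₀ f₁ : (Fin n → ℝ) → ℝ) (hf₀ : ContDiff ℝ (⊤ : ℕ∞) f₀) (hf₁ : ContDiff ℝ (⊤ : ℕ∞) f₁)
    (φ₀ : (Fin k → ℝ) → (Fin n → ℝ)) (hφ₀ : ContDiff ℝ (⊤ : ℕ∞) φ₀)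
    (hS₀ : ∀ ξ, f₀ (φ₀ ξ) = 0)
    (P₀ : (Fin k → ℝ) → Matrix (Fin n) (Fin n) ℝ)
    (hker₁ : ∀ ξ, P₀ ξ *ᵥ N₀ = 0)
    (hker₂ : ∀ ξ (v : Fin n → ℝ), P₀ ξ *ᵥ v = 0 → ∃ c : ℝ, v = c • N₀) :
    ((∃ ξ, P₀ ξ *ᵥ (f₁ (φ₀ ξ) • N₁) = 0 ∧ f₁ (φ₀ ξ) • N₁ ≠ 0) →
      (∃ c : ℝ, N₁ = c • N₀) ∧ (∀ ξ, P₀ ξ *ᵥ (f₁ (φ₀ ξ) • N₁) = 0)) ∧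
    ((∀ ξ, P₀ ξ *ᵥ (f₁ (φ₀ ξ) • N₁) = 0 → f₁ (φ₀ ξ) • N₁ = 0) ∨
     (∀ ξ, P₀ ξ *ᵥ (f₁ (φ₀ ξ) • N₁) = 0)) := by
  have main : (∃ ξ, P₀ ξ *ᵥ (f₁ (φ₀ ξ) • N₁) = 0 ∧ f₁ (φ₀ ξ) • N₁ ≠ 0) →
      (∃ c : ℝ, N₁ = c • N₀) ∧ (∀ ξ, P₀ ξ *ᵥ (f₁ (φ₀ ξ) • N₁) = 0) := by
    rintro ⟨ξ, h0, hne⟩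
    have ha : f₁ (φ₀ ξ) ≠ 0 := by
      intro h; exact hne (by simp [h])
    obtain ⟨c, hc⟩ := hker₂ ξ _ h0
    have hN : N₁ = (c / f₁ (φ₀ ξ)) • N₀ := by
      have := congrArg (fun v => (f₁ (φ₀ ξ))⁻¹ • v) hc
      simpa [smul_smul, inv_mul_cancel₀ ha, div_eq_inv_mul] using this
    refine ⟨⟨_, hN⟩, fun ξ' => ?_⟩
    rw [hN]
    rw [smul_comm, Matrix.mulVec_smul, Matrix.mulVec_smul, hker₁ ξ']
    simp
  refine ⟨main, ?_⟩
  by_cases h : ∃ ξ, P₀ ξ *ᵥ (f₁ (φ₀ ξ) • N₁) = 0 ∧ f₁ (φ₀ ξ) • N₁ ≠ 0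
  · exact Or.inr (main h).2
  · push_neg at h
    exact Or.inl fun ξ hξ => by by_contra hne; exact hne (h ξ hξ)
end

section
/- Consider the system x₁' = x₃², x₂' = 0, x₃' = -x₃, perturbed by ε·(0, -x₂, 1). Then {x₃ = ε} is invariant, the induced flow on it is ẋ₁ = ε², ẋ₂ = -εx₂ (in original time: x₁' = ε², x₂' = -εx₂), and the second-order term of the reduced infra-slow vector field on the line {x₂ = 0, x₃ = ε}, computed via r₂^{(2)}(η) = P̃₀^{(1)}(η)P̃₀^{(0)}(φ₀^{(1)}(η))G₂, equals the constant 1, where the only nonvanishing contribution to G₂ comes from the Hessian term ½D²F₀(φ₀^{(0)})(φ₁^{(0)}, φ₁^{(0)}) = (1,0,0)ᵀ. -/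
open Matrix

theorem eq_const_of_hasDerivAt_of_lipschitzWith {E : Type*} [NormedAddCommGroup E]
    [NormedSpace ℝ E] {v : E → E} {K : NNReal} (hv : LipschitzWith K v) {c : E} (hc : v c = 0)
    {x : ℝ → E} (hx : ∀ t, HasDerivAt x (v (x t)) t) {t₀ : ℝ} (h₀ : x t₀ = c) :
    x = fun _ ↦ c :=
  ODE_solution_unique_univ (v := fun _ ↦ v) (s := fun _ ↦ Set.univ)
    (fun _ ↦ hv.lipschitzOnWith) (fun t ↦ ⟨hx t, trivial⟩)
    (fun _ ↦ ⟨hc ▸ hasDerivAt_const _ c, trivial⟩) h₀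

theorem stmt18_general (ε : ℝ)
    (x₁ x₂ x₃ : ℝ → ℝ)
    (hx₁ : ∀ t, HasDerivAt x₁ ((x₃ t) ^ 2) t)
    (hx₂ : ∀ t, HasDerivAt x₂ (ε * (-(x₂ t))) t)
    (hx₃ : ∀ t, HasDerivAt x₃ (-(x₃ t) + ε) t) :
    (x₃ 0 = ε → ∀ t, x₃ t = ε) ∧
    ((∀ t, x₃ t = ε) →
      ∀ t, HasDerivAt x₁ (ε ^ 2) t ∧ HasDerivAt x₂ (-(ε * x₂ t)) t) ∧
    ((1 / 2 : ℝ) • (![(0 : ℝ), 0, 1] ⬝ᵥ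
        (!![(0 : ℝ), 0, 0; 0, 0, 0; 0, 0, 2] *ᵥ ![(0 : ℝ), 0, 1])) = 1) ∧
    (∀ η : ℝ,
      ((!![(1 : ℝ), 0] * !![(1 : ℝ), 0, 0; 0, 1, 0]) *ᵥ ![(1 : ℝ), 0, 0])
        = ![(1 : ℝ)]) := by
  refine ⟨fun h₀ t ↦ ?_, fun h t ↦ ⟨?_, ?_⟩, ?_, fun _ ↦ ?_⟩
  · have hv : LipschitzWith 1 (fun y : ℝ ↦ -y + ε) :=
      LipschitzWith.of_dist_le_mul fun a b ↦ by simp [Real.dist_eq]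
    exact congrFun (eq_const_of_hasDerivAt_of_lipschitzWith hv (by ring) hx₃ h₀) t
  · simpa only [h t] using hx₁ t
  · simpa only [mul_neg] using hx₂ t
  · norm_num [dotProduct, mulVec, Fin.sum_univ_succ]
  · ext i
    fin_cases i
    simp [mulVec, mul_apply, dotProduct, Fin.sum_univ_succ]

/-- For the system `x₁' = x₃², x₂' = -εx₂, x₃' = -x₃ + ε` (i.e.
`F₀(x) = (x₃², 0, -x₃)` perturbed by `ε(0, -x₂, 1)`): the plane `{x₃ = ε}` is
invariant; on it the induced flow is `x₁' = ε², x₂' = -εx₂`; the only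
nonvanishing contribution to `G₂` is the Hessian term
`½D²F₀(φ₀⁽⁰⁾)(φ₁⁽⁰⁾, φ₁⁽⁰⁾) = (1,0,0)ᵀ` (with `φ₁⁽⁰⁾ = (0,0,1)` and Hessian of
the first component of `F₀` having a single entry `2`); and the second-order
infra-slow vector field `r₂⁽²⁾(η) = P̃₀⁽¹⁾ P̃₀⁽⁰⁾ G₂` equals the constant `1`. -/
theorem stmt18 (ε : ℝ) (hε : 0 < ε)
    (x₁ x₂ x₃ : ℝ → ℝ)
    (hx₁ : ∀ t, HasDerivAt x₁ ((x₃ t) ^ 2) t)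
    (hx₂ : ∀ t, HasDerivAt x₂ (ε * (-(x₂ t))) t)
    (hx₃ : ∀ t, HasDerivAt x₃ (-(x₃ t) + ε) t) :
    (x₃ 0 = ε → ∀ t, x₃ t = ε) ∧
    ((∀ t, x₃ t = ε) →
      ∀ t, HasDerivAt x₁ (ε ^ 2) t ∧ HasDerivAt x₂ (-(ε * x₂ t)) t) ∧
    ((1 / 2 : ℝ) • (![(0 : ℝ), 0, 1] ⬝ᵥ
        (!![(0 : ℝ), 0, 0; 0, 0, 0; 0, 0, 2] *ᵥ ![(0 : ℝ), 0, 1])) = 1) ∧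
    (∀ η : ℝ,
      ((!![(1 : ℝ), 0] * !![(1 : ℝ), 0, 0; 0, 1, 0]) *ᵥ ![(1 : ℝ), 0, 0])
        = ![(1 : ℝ)]) :=
  stmt18_general ε x₁ x₂ x₃ hx₁ hx₂ hx₃
end
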